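/- arXiv:1706.04879 — 14 statements merged into one kernel-verified Lean document; each statement's English description precedes it below -/
import Mathlib

section
/- In any idempotent semiring S, for all a, b ∈ S, the elements a+b and b+a are related by σ, where σ is defined by x σ y iff xyx = xyx + x + xyx and yxy = yxy + y + yxy. -/
class IdemSemiring' (S : Type*) extends Add S, Mul S where
  add_assoc : ∀ a b c : S, a + b + c = a + (b + c)
  mul_assoc : ∀ a b c : S, a * b * c = a * (b * c)
  left_distrib : ∀ a b c : S, a * (b + c) = a * b + a * c
  right_distrib : ∀ a b c : S, (a + b) * c = a * c + b * c
  add_idem : ∀ a : S, a + a = a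
  mul_idem : ∀ a : S, a * a = a

def sigmaRel {S : Type*} [IdemSemiring' S] (a b : S) : Prop :=
  a * b * a = a * b * a + a + a * b * a ∧ b * a * b = b * a * b + b + b * a * b

section aux
variable {S : Type*} [IdemSemiring' S]

lemma key_add (a b : S) : (b + a) + (a + b) + (b + a) = b + a := by
  have : (b + a) + (a + b) + (b + a) = b + (a + a) + ((b + b) + a) := by
    rw [IdemSemiring'.add_assoc, IdemSemiring'.add_assoc, IdemSemiring'.add_assoc, IdemSemiring'.add_assoc, IdemSemiring'.add_assoc, IdemSemiring'.add_assoc]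
  rw [this, IdemSemiring'.add_idem, IdemSemiring'.add_idem]
  have : b + a + (b + a) = (b + a) + (b + a) := by rw [IdemSemiring'.add_assoc]
  rw [this, IdemSemiring'.add_idem]

lemma cube (x : S) : x * x * x = x := by rw [IdemSemiring'.mul_idem, IdemSemiring'.mul_idem]

lemma main_aux (x y : S) (h : y + x + y = y) :
    x * y * x = x * y * x + x + x * y * x := by
  conv_lhs => rw [← h]
  rw [IdemSemiring'.left_distrib, IdemSemiring'.left_distrib, IdemSemiring'.right_distrib, IdemSemiring'.right_distrib, cube]

end aux

theorem stmt0 {S : Type*} [IdemSemiring' S] (a b : S) :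
    sigmaRel (a + b) (b + a) := by
  constructor
  · exact main_aux (a + b) (b + a) (key_add a b)
  · exact main_aux (b + a) (a + b) (key_add b a)
end

section
/- In any idempotent semiring S, for all a, b ∈ S, the elements ab and ba are related by σ, where σ is defined by x σ y iff xyx = xyx + x + xyx and yxy = yxy + y + yxy. -/
lemma key {S : Type*} [IdemSemiring' S] (x y : S) :
    (x * y) * (y * x) * (x * y) = x * y := by
  have h1 : (x * y) * (y * x) = (x * y) * x := by
    rw [IdemSemiring'.mul_assoc x y (y * x), ← IdemSemiring'.mul_assoc y y x,
      IdemSemiring'.mul_idem, ← IdemSemiring'.mul_assoc]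
  rw [h1, IdemSemiring'.mul_assoc (x * y) x (x * y), ← IdemSemiring'.mul_assoc x x y,
    IdemSemiring'.mul_idem, IdemSemiring'.mul_idem]

theorem stmt1 {S : Type*} [IdemSemiring' S] (a b : S) :
    sigmaRel (a * b) (b * a) := by
  constructor
  · rw [key a b, IdemSemiring'.add_idem, IdemSemiring'.add_idem]
  · rw [key b a, IdemSemiring'.add_idem, IdemSemiring'.add_idem]
end

section
/- In any idempotent semiring S, for all a, b ∈ S, the elements a + ab and a are related by σ, where σ is defined by x σ y iff xyx = xyx + x + xyx and yxy = yxy + y + yxy. -/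
theorem stmt2 {S : Type*} [IdemSemiring' S] (a b : S) :
    sigmaRel (a + a * b) a := by
  have aux : ∀ p q : S, (p + q) + p + (p + q) = p + q := by
    intro p q
    rw [IdemSemiring'.add_assoc, IdemSemiring'.add_assoc,
      ← IdemSemiring'.add_assoc p p q, IdemSemiring'.add_idem,
      ← IdemSemiring'.add_assoc p q (p + q)]
    exact IdemSemiring'.add_idem (p + q)
  set x := a + a * b with hx
  have hax : a * x = x := by
    rw [hx, IdemSemiring'.left_distrib, IdemSemiring'.mul_idem,
      ← IdemSemiring'.mul_assoc, IdemSemiring'.mul_idem]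
  constructor
  · have h1 : x * a * x = x * x := by rw [IdemSemiring'.mul_assoc, hax]
    have hxx : x * x = x + (a * b) * x := by
      conv_lhs => rw [hx]
      rw [IdemSemiring'.right_distrib, hax]
    rw [h1, hxx]
    exact (aux x ((a * b) * x)).symm
  · have h2 : a * x * a = a + a * b * a := by
      rw [hax, hx, IdemSemiring'.right_distrib, IdemSemiring'.mul_idem]
    rw [h2]
    exact (aux a (a * b * a)).symm
end

section
/- If ρ is a congruence on an idempotent semiring S such that the quotient S/ρ is a distributive lattice, then σ ⊆ ρ, where σ is defined by a σ b iff aba = aba + a + aba and bab = bab + b + bab. -/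
theorem stmt3 {S : Type*} [IdemSemiring' S] (ρ : S → S → Prop)
    (hequiv : Equivalence ρ)
    (hadd : ∀ a b c d : S, ρ a b → ρ c d → ρ (a + c) (b + d))
    (hmul : ∀ a b c d : S, ρ a b → ρ c d → ρ (a * c) (b * d))
    (haddcomm : ∀ a b : S, ρ (a + b) (b + a))
    (hmulcomm : ∀ a b : S, ρ (a * b) (b * a))
    (habsorb1 : ∀ a b : S, ρ (a + a * b) a)
    (habsorb2 : ∀ a b : S, ρ (a * (a + b)) a) :
    ∀ a b : S, sigmaRel a b → ρ a b := by
  -- key: for any x y with xyx = xyx + x + xyx, ρ (x*y*x) x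
  have key : ∀ x y : S, x * y * x = x * y * x + x + x * y * x → ρ (x * y * x) x := by
    intro x y h
    have h1 : ρ (x * y * x) ((x * y * x + x) + x * y * x) := h ▸ hequiv.refl _
    have h2 : ρ ((x * y * x + x) + x * y * x) ((x + x * y * x) + x * y * x) :=
      hadd _ _ _ _ (haddcomm _ _) (hequiv.refl _)
    have e3 : (x + x * y * x) + x * y * x = x + x * y * x := by
      rw [IdemSemiring'.add_assoc, IdemSemiring'.add_idem]
    have h4 : ρ (x + x * y * x) x := by
      have := habsorb1 x (y * x)
      rwa [← IdemSemiring'.mul_assoc] at this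
    exact hequiv.trans h1 (hequiv.trans h2 (by rw [e3]; exact h4))
  -- ρ (x*y*x) (x*y)
  have key2 : ∀ x y : S, ρ (x * y * x) (x * y) := by
    intro x y
    have h1 : ρ (x * y * x) (x * (x * y)) := hmulcomm _ _
    have e2 : x * (x * y) = x * y := by
      rw [← IdemSemiring'.mul_assoc, IdemSemiring'.mul_idem]
    nth_rewrite 2 [← e2]; exact h1
  intro a b ⟨h1, h2⟩
  have ha : ρ a (a * b) := hequiv.trans (hequiv.symm (key a b h1)) (key2 a b)
  have hb : ρ b (b * a) := hequiv.trans (hequiv.symm (key b a h2)) (key2 b a)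
  exact hequiv.trans ha (hequiv.trans (hmulcomm a b) (hequiv.symm hb))
end

section
/- An idempotent semiring S satisfies the identity x + xyx + x ≈ x (for all x,y) if and only if it satisfies the identity xz + xyz + xz ≈ xz (for all x,y,z). -/
theorem stmt4 {S : Type*} [IdemSemiring' S] :
    (∀ x y : S, x + x * y * x + x = x) ↔
      (∀ x y z : S, x * z + x * y * z + x * z = x * z) := by
  have A : ∀ a b c : S, a + b + c = a + (b + c) := IdemSemiring'.add_assoc
  have M : ∀ a b c : S, a * b * c = a * (b * c) := IdemSemiring'.mul_assoc
  have LD : ∀ a b c : S, a * (b + c) = a * b + a * c := IdemSemiring'.left_distrib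
  have RD : ∀ a b c : S, (a + b) * c = a * c + b * c := IdemSemiring'.right_distrib
  have MI : ∀ a : S, a * a = a := IdemSemiring'.mul_idem
  have mi2 : ∀ a b : S, a * (a * b) = a * b := by
    intro a b; rw [← M, MI]
  have sq2e : ∀ a b : S, a * (b * (a * b)) = a * b := by
    intro a b
    rw [← M a b (a * b), MI]
  have sq2 : ∀ a b t : S, a * (b * (a * (b * t))) = a * (b * t) := by
    intro a b t
    rw [← M a b (a * (b * t)), ← M a b t, ← M (a*b) (a*b) t, MI (a*b)]
  have sq3 : ∀ a b c : S, a * (b * (c * (a * (b * c)))) = a * (b * c) := by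
    intro a b c
    conv_lhs => rw [← M b c (a * (b * c)), ← M a (b * c) (a * (b * c))]
    rw [MI]
  constructor
  · intro h x y z
    calc x * z + x * y * z + x * z
        = (x * z + x * y * z + x * z) * (x * z + x * y * z + x * z) := (MI _).symm
      _ = (x + x * (y * z) * x + x) * (z + z * (x * y) * z + z) := by
          simp only [LD, RD, M, mi2, sq2e, sq2, sq3, A]
      _ = x * z := by rw [h x (y * z), h z (x * y)]
  · intro h x y
    have hx := h x y x
    rwa [MI x] at hx
end

section
/- If an idempotent semiring S satisfies x + xyx + x ≈ x, then the relation σ defined by a σ b iff aba = aba + a + aba and bab = bab + b + bab is transitive. More precisely, if a σ b via the above with respect to some x (i.e., axbxa = axbxa + a + axbxa and bxaxb = bxaxb + b + bxaxb for some x), then a σ b holds directly: aba = aba + a + aba and bab = bab + b + bab. -/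
namespace Stmt5Aux

variable {S : Type*} [IdemSemiring' S]

lemma aA (a b c : S) : a + b + c = a + (b + c) := IdemSemiring'.add_assoc a b c
lemma mA (a b c : S) : a * b * c = a * (b * c) := IdemSemiring'.mul_assoc a b c
lemma aI (a : S) : a + a = a := IdemSemiring'.add_idem a
lemma mI (a : S) : a * a = a := IdemSemiring'.mul_idem a
lemma ld (a b c : S) : a * (b + c) = a * b + a * c := IdemSemiring'.left_distrib a b c
lemma rd (a b c : S) : (a + b) * c = a * c + b * c := IdemSemiring'.right_distrib a b c

lemma sq1t (u t : S) : u * (u * t) = u * t := by rw [← mA, mI]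
lemma sq2 (u v : S) : u * (v * (u * v)) = u * v := by rw [← mA, mI]
lemma sq3 (u v w : S) : u * (v * (w * (u * (v * w)))) = u * (v * w) := by
  rw [show u * (v * (w * (u * (v * w)))) = (u * (v * w)) * (u * (v * w)) from by
    simp only [mA], mI]

/-- right multiplication preserves absorption -/
lemma rmulR {u v : S} (h : u + v + u = u) (t : S) :
    u * t + v * t + u * t = u * t := by
  rw [← rd, ← rd, h]

/-- left multiplication preserves absorption -/
lemma lmulR {u v : S} (h : u + v + u = u) (t : S) :
    t * u + t * v + t * u = t * u := by
  rw [← ld, ← ld, h]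

/-- transitivity of absorption: u ⊴ v, v ⊴ w ⟹ u ⊴ w -/
lemma Rtrans {u v w : S} (h1 : u + v + u = u) (h2 : v + w + v = v) :
    u + w + u = u := by
  have e1 : u + (v + w + v) + u = u := by rw [h2]; exact h1
  have e2 : u + v + w + u = u := by
    calc u + v + w + u
        = u + v + w + (u + (v + w + v) + u) := by rw [e1]
      _ = (u + v + w) + (u + v + w) + (v + u) := by simp only [aA]
      _ = (u + v + w) + (v + u) := by rw [aI]
      _ = u + (v + w + v) + u := by simp only [aA]
      _ = u := e1
  have e3 : w + (u + w + u) = w + u := by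
    calc w + (u + w + u) = (w + u) + (w + u) := by simp only [aA]
      _ = w + u := aI _
  calc u + w + u
      = (u + v + w + u) + w + u := by rw [e2]
    _ = (u + v) + (w + (u + w + u)) := by simp only [aA]
    _ = (u + v) + (w + u) := by rw [e3]
    _ = u + v + w + u := by simp only [aA]
    _ = u := e2

/-- the key one-sided lemma -/
lemma key (hN : ∀ x y : S, x + x * y * x + x = x) (a b x : S)
    (h : a * x * b * x * a + a + a * x * b * x * a = a * x * b * x * a) :
    a * b * a + a + a * b * a = a * b * a := by
  -- R a p : a + axbxa + a = a
  have hap : a + a * x * b * x * a + a = a := by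
    have h0 := hN a (x * b * x)
    simp only [← mA] at h0
    exact h0
  -- s1 : R a (axba)
  have s1 : a + a * x * b * a + a = a := by
    have h0 := hN a (x * b)
    simp only [← mA] at h0
    exact h0
  -- s2 : R (aba) (axba)
  have s2 : a * b * a + a * x * b * a + a * b * a = a * b * a := by
    have h0 := rmulR s1 (a * b * a)
    have e1 : a * (a * b * a) = a * b * a := by
      simp only [mA, sq1t]
    have e2 : (a * x * b * a) * (a * b * a) = a * x * b * a := by
      simp only [mA, sq1t, sq2]
    rw [e1, e2] at h0
    exact h0
  -- s5 : R (abaxb) (axb)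
  have s5 : a * b * a * x * b + a * x * b + a * b * a * x * b = a * b * a * x * b := by
    have h0 := rmulR s2 (x * b)
    have e4 : (a * x * b * a) * (x * b) = a * x * b := by
      simp only [mA, sq3]
    have e5 : (a * b * a) * (x * b) = a * b * a * x * b := by
      simp only [mA]
    rw [e4, e5] at h0
    exact h0
  -- s8 : R ((ab)·p) p  where p = axbxa
  have s8 : (a * b) * (a * x * b * x * a) + a * x * b * x * a +
      (a * b) * (a * x * b * x * a) = (a * b) * (a * x * b * x * a) := by
    have h0 := rmulR s5 (x * a)
    have e6 : (a * b * a * x * b) * (x * a) = (a * b) * (a * x * b * x * a) := by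
      simp only [mA]
    have e7 : (a * x * b) * (x * a) = a * x * b * x * a := by
      simp only [mA]
    rw [e6, e7] at h0
    exact h0
  -- s9 : R (aba) ((ab)·p)
  have s9 : a * b * a + (a * b) * (a * x * b * x * a) + a * b * a = a * b * a :=
    lmulR hap (a * b)
  -- chain
  exact Rtrans (Rtrans s9 s8) h

end Stmt5Aux

theorem stmt5 {S : Type*} [IdemSemiring' S]
    (hN : ∀ x y : S, x + x * y * x + x = x) :
    ∀ a b x : S,
      a * x * b * x * a = a * x * b * x * a + a + a * x * b * x * a →
      b * x * a * x * b = b * x * a * x * b + b + b * x * a * x * b →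
      sigmaRel a b := by
  intro a b x h1 h2
  exact ⟨(Stmt5Aux.key hN a b x h1.symm).symm, (Stmt5Aux.key hN b a x h2.symm).symm⟩
end

section
/- An idempotent semiring S satisfies the identity x + xy + x ≈ x if and only if it satisfies x + xyx + x ≈ x and the multiplicative R-relation is contained in the additive D-relation (i.e., whenever ab = b and ba = a, we have a + b + a = a and b + a + b = b). -/
theorem stmt8 {S : Type*} [IdemSemiring' S] :
    (∀ x y : S, x + x * y + x = x) ↔
      ((∀ x y : S, x + x * y * x + x = x) ∧
        ∀ a b : S, a * b = b → b * a = a → a + b + a = a ∧ b + a + b = b) := by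
  constructor
  · intro h
    refine ⟨fun x y => ?_, fun a b hab hba => ⟨?_, ?_⟩⟩
    · have := h x (y * x); rwa [← IdemSemiring'.mul_assoc] at this
    · have := h a b; rwa [hab] at this
    · have := h b a; rwa [hba] at this
  · rintro ⟨h1, h2⟩ x y
    have hab : x * (x + x * y + x) = x + x * y + x := by
      rw [IdemSemiring'.left_distrib, IdemSemiring'.left_distrib, IdemSemiring'.mul_idem,
        ← IdemSemiring'.mul_assoc, IdemSemiring'.mul_idem]
    have hba : (x + x * y + x) * x = x := by
      rw [IdemSemiring'.right_distrib, IdemSemiring'.right_distrib, IdemSemiring'.mul_idem]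
      exact h1 x y
    have h3 := (h2 x (x + x * y + x) hab hba).1
    have e : x + (x + x * y + x) + x = x + x * y + x := by
      rw [← IdemSemiring'.add_assoc, ← IdemSemiring'.add_assoc, IdemSemiring'.add_idem,
        IdemSemiring'.add_assoc (x + x * y) x x, IdemSemiring'.add_idem]
    rw [e] at h3
    exact h3
end

section
/- Let S be an idempotent semiring satisfying x ≈ xy + x + xy for all x, y. Then for all a, b ∈ S with aba = a and bab = b (i.e., a D• b in the multiplicative band), we have ab = a and ba = b (i.e., a L• b). -/
private lemma key10 {S : Type*} [IdemSemiring' S]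
    (h : ∀ x y : S, x = x * y + x + x * y) (a b : S) (hab : a * b * a = a) :
    a * b = a := by
  have aa := IdemSemiring'.add_assoc (S := S)
  have ma := IdemSemiring'.mul_assoc (S := S)
  have rd := IdemSemiring'.right_distrib (S := S)
  have ai := IdemSemiring'.add_idem (S := S)
  have mi := IdemSemiring'.mul_idem (S := S)
  have e1 : a = a * b + a + a * b := h a b
  have e2 : a * b = a + a * b + a := by
    have := h (a * b) a
    rwa [hab] at this
  have habb : a * b * b = a * b := by rw [ma, mi]
  have e3 : a + a * b = a := by
    have e := h (a + a * b) b
    rw [rd, habb, ai] at e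
    -- e : a + a*b = a*b + (a + a*b) + a*b
    calc a + a * b = a * b + (a + a * b) + a * b := e
      _ = a * b + (a + (a * b + a * b)) := by rw [aa, aa]
      _ = a * b + (a + a * b) := by rw [ai]
      _ = a * b + a + a * b := by rw [aa]
      _ = a := e1.symm
  rw [e2, e3, ai]

theorem stmt10 {S : Type*} [IdemSemiring' S]
    (h : ∀ x y : S, x = x * y + x + x * y) :
    ∀ a b : S, a * b * a = a → b * a * b = b → a * b = a ∧ b * a = b := by
  intro a b hab hba
  exact ⟨key10 h a b hab, key10 h b a hba⟩
end

section
/- Let S be an idempotent semiring such that the additive Green's relation D+ is contained in the multiplicative relation L• (i.e., a + b + a = a and b + a + b = b imply ab = a and ba = b) and S satisfies x + xy + x ≈ x. Then S satisfies x ≈ xy + x + xy. -/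
theorem stmt11 {S : Type*} [IdemSemiring' S]
    (hD : ∀ a b : S, a + b + a = a ∧ b + a + b = b → a * b = a ∧ b * a = b)
    (hbi : ∀ x y : S, x + x * y + x = x) :
    ∀ x y : S, x = x * y + x + x * y := by
  have Aa := IdemSemiring'.add_assoc (S := S)
  have Ai := IdemSemiring'.add_idem (S := S)
  have Ma := IdemSemiring'.mul_assoc (S := S)
  have Mi := IdemSemiring'.mul_idem (S := S)
  have Ld := IdemSemiring'.left_distrib (S := S)
  intro x y
  set b := x * y + x + x * y with hb
  have e1 : x + b = x + x * y := by rw [hb, ← Aa, ← Aa, hbi]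
  have h1 : x + b + x = x := by rw [e1, hbi]
  have e2 : b + x = x * y + x := by rw [hb, Aa (x*y+x) (x*y) x, Ai]
  have h2 : b + x + b = b := by rw [e2, hb, ← Aa, Ai]
  obtain ⟨hxb, -⟩ := hD x b ⟨h1, h2⟩
  have e3 : x * b = x * y + x + x * y := by rw [hb, Ld, Ld, ← Ma, Mi]
  rw [hb, ← e3]; exact hxb.symm
end

section
/- An idempotent semiring S satisfies the identity x ≈ xy + x + xy if and only if the quasi-order ≤ˡ· is contained in the partial order ≤₊, i.e., for all a, b: if a = ba then b + a = b and a + b = b. -/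
instance {S : Type*} [IdemSemiring' S] : Semigroup S :=
  { mul_assoc := IdemSemiring'.mul_assoc }

instance {S : Type*} [IdemSemiring' S] : AddSemigroup S :=
  { add_assoc := IdemSemiring'.add_assoc }

theorem stmt12 {S : Type*} [IdemSemiring' S] :
    (∀ x y : S, x = x * y + x + x * y) ↔
      (∀ a b : S, a = b * a → b = a + b ∧ b = b + a) := by
  constructor
  · intro h a b hab
    have hb : b = a + b + a := by
      have hba := h b a
      rw [← hab] at hba
      exact hba
    constructor
    · -- b = a + b
      have : a + b = b := by
        conv_lhs => rw [hb]
        rw [← add_assoc, ← add_assoc, IdemSemiring'.add_idem, ← hb]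
      exact this.symm
    · have : b + a = b := by
        conv_lhs => rw [hb]
        rw [add_assoc (a + b) a a, IdemSemiring'.add_idem, ← hb]
      exact this.symm
  · intro h x y
    have hxy : x * (x * y) = x * y := by
      rw [← mul_assoc, IdemSemiring'.mul_idem]
    have h1 := h (x * y + x) x (by
      rw [IdemSemiring'.left_distrib, hxy, IdemSemiring'.mul_idem])
    have h2 := h (x + x * y) x (by
      rw [IdemSemiring'.left_distrib, hxy, IdemSemiring'.mul_idem])
    have A : x = x * y + x := by
      have := h1.1
      rwa [add_assoc, IdemSemiring'.add_idem] at this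
    have B : x = x + x * y := by
      have := h2.2
      rwa [← add_assoc, IdemSemiring'.add_idem] at this
    calc x = x * y + x := A
      _ = x * y + (x + x * y) := by rw [← B]
      _ = x * y + x + x * y := by rw [add_assoc]
end

section
/- Let S be an idempotent semiring on which there is a congruence δ such that S/δ is a distributive lattice and every δ-class is a left-zero band under multiplication (i.e., a δ b implies ab = a). Then S satisfies the identity x ≈ xy + x + xy. -/
theorem stmt13 {S : Type*} [IdemSemiring' S] (δ : S → S → Prop)
    (hequiv : Equivalence δ)
    (hadd : ∀ a b c d : S, δ a b → δ c d → δ (a + c) (b + d))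
    (hmul : ∀ a b c d : S, δ a b → δ c d → δ (a * c) (b * d))
    (haddcomm : ∀ a b : S, δ (a + b) (b + a))
    (hmulcomm : ∀ a b : S, δ (a * b) (b * a))
    (habsorb1 : ∀ a b : S, δ (a + a * b) a)
    (habsorb2 : ∀ a b : S, δ (a * (a + b)) a)
    (hlz : ∀ a b : S, δ a b → a * b = a) :
    ∀ x y : S, x = x * y + x + x * y := by
  intro x y
  set u := x * y + x + x * y with hu
  -- δ u x
  have h1 : δ (x * y + x) (x + x * y) := haddcomm _ _
  have h2 : δ u (x + x * y + x * y) := hadd _ _ _ _ h1 (hequiv.refl _)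
  have h3 : x + x * y + x * y = x + x * y := by
    rw [IdemSemiring'.add_assoc, IdemSemiring'.add_idem]
  rw [h3] at h2
  have hdux : δ u x := hequiv.trans h2 (habsorb1 x y)
  -- x * u = u
  have hxxy : x * (x * y) = x * y := by
    rw [← IdemSemiring'.mul_assoc, IdemSemiring'.mul_idem]
  have hxu : x * u = u := by
    rw [hu, IdemSemiring'.left_distrib, IdemSemiring'.left_distrib, hxxy,
      IdemSemiring'.mul_idem]
  have := hlz x u (hequiv.symm hdux)
  rw [hxu] at this
  exact this.symm
end

section
/- Every idempotent semiring satisfies the identities xyzx ≈ xyzx + xyxzx + xyzx and xyxzx ≈ xyxzx + xyzx + xyxzx. -/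
section Aux

variable {S : Type*} [IdemSemiring' S]

private lemma mi' (a : S) : a * a = a := IdemSemiring'.mul_idem a
private lemma ai' (a : S) : a + a = a := IdemSemiring'.add_idem a
private lemma M' (a b c : S) : a * b * c = a * (b * c) := IdemSemiring'.mul_assoc a b c
private lemma A' (a b c : S) : a + b + c = a + (b + c) := IdemSemiring'.add_assoc a b c
private lemma ld' (a b c : S) : a * (b + c) = a * b + a * c := IdemSemiring'.left_distrib a b c
private lemma rd' (a b c : S) : (a + b) * c = a * c + b * c := IdemSemiring'.right_distrib a b c

/-- square expansion, order A : (p+q)² = (p+q)p + (p+q)q -/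
private lemma engA (a p q b : S) :
    (a*p)*b + (a*q)*b =
      ((a*(p*p))*b + (a*(q*p))*b) + ((a*(p*q))*b + (a*(q*q))*b) := by
  calc (a*p)*b + (a*q)*b
      = (a*p + a*q)*b := (rd' (a*p) (a*q) b).symm
    _ = (a*(p+q))*b := by rw [← ld' a p q]
    _ = (a*((p+q)*(p+q)))*b := by rw [mi' (p+q)]
    _ = (a*((p+q)*p + (p+q)*q))*b := by rw [ld' (p+q) p q]
    _ = (a*((p*p + q*p) + (p*q + q*q)))*b := by rw [rd' p q p, rd' p q q]
    _ = (a*(p*p + q*p) + a*(p*q + q*q))*b := by rw [ld' a (p*p + q*p) (p*q + q*q)]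
    _ = ((a*(p*p) + a*(q*p)) + (a*(p*q) + a*(q*q)))*b := by
        rw [ld' a (p*p) (q*p), ld' a (p*q) (q*q)]
    _ = (a*(p*p) + a*(q*p))*b + (a*(p*q) + a*(q*q))*b :=
        rd' (a*(p*p) + a*(q*p)) (a*(p*q) + a*(q*q)) b
    _ = ((a*(p*p))*b + (a*(q*p))*b) + ((a*(p*q))*b + (a*(q*q))*b) := by
        rw [rd' (a*(p*p)) (a*(q*p)) b, rd' (a*(p*q)) (a*(q*q)) b]

/-- square expansion, order B : (p+q)² = p(p+q) + q(p+q) -/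
private lemma engB (a p q b : S) :
    (a*p)*b + (a*q)*b =
      ((a*(p*p))*b + (a*(p*q))*b) + ((a*(q*p))*b + (a*(q*q))*b) := by
  calc (a*p)*b + (a*q)*b
      = (a*p + a*q)*b := (rd' (a*p) (a*q) b).symm
    _ = (a*(p+q))*b := by rw [← ld' a p q]
    _ = (a*((p+q)*(p+q)))*b := by rw [mi' (p+q)]
    _ = (a*(p*(p+q) + q*(p+q)))*b := by rw [rd' p q (p+q)]
    _ = (a*((p*p + p*q) + (q*p + q*q)))*b := by rw [ld' p p q, ld' q p q]
    _ = (a*(p*p + p*q) + a*(q*p + q*q))*b := by rw [ld' a (p*p + p*q) (q*p + q*q)]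
    _ = ((a*(p*p) + a*(p*q)) + (a*(q*p) + a*(q*q)))*b := by
        rw [ld' a (p*p) (p*q), ld' a (q*p) (q*q)]
    _ = (a*(p*p) + a*(p*q))*b + (a*(q*p) + a*(q*q))*b :=
        rd' (a*(p*p) + a*(p*q)) (a*(q*p) + a*(q*q)) b
    _ = ((a*(p*p))*b + (a*(p*q))*b) + ((a*(q*p))*b + (a*(q*q))*b) := by
        rw [rd' (a*(p*p)) (a*(p*q)) b, rd' (a*(q*p)) (a*(q*q)) b]

/-- band fact: (acb)(ab)(acb) = acb -/
private lemma LB (a b c : S) : ((a*c)*b)*((a*b)*((a*c)*b)) = (a*c)*b := by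
  calc ((a*c)*b)*((a*b)*((a*c)*b))
      = (a*c)*(b*((a*b)*((a*c)*b))) := M' (a*c) b ((a*b)*((a*c)*b))
    _ = (a*c)*((b*(a*b))*((a*c)*b)) := by rw [← M' b (a*b) ((a*c)*b)]
    _ = (a*c)*(((b*a)*b)*((a*c)*b)) := by rw [← M' b a b]
    _ = (a*c)*((b*a)*(b*((a*c)*b))) := by rw [M' (b*a) b ((a*c)*b)]
    _ = (a*c)*((b*a)*((b*(a*c))*b)) := by rw [← M' b (a*c) b]
    _ = (a*c)*((b*a)*(((b*a)*c)*b)) := by rw [← M' b a c]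
    _ = (a*c)*((b*a)*((b*a)*(c*b))) := by rw [M' (b*a) c b]
    _ = (a*c)*(((b*a)*(b*a))*(c*b)) := by rw [← M' (b*a) (b*a) (c*b)]
    _ = (a*c)*((b*a)*(c*b)) := by rw [mi' (b*a)]
    _ = ((a*c)*(b*a))*(c*b) := (M' (a*c) (b*a) (c*b)).symm
    _ = (((a*c)*b)*a)*(c*b) := by rw [← M' (a*c) b a]
    _ = ((a*c)*b)*(a*(c*b)) := M' ((a*c)*b) a (c*b)
    _ = ((a*c)*b)*((a*c)*b) := by rw [← M' a c b]
    _ = (a*c)*b := mi' ((a*c)*b)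

end Aux

theorem stmt14 {S : Type*} [IdemSemiring' S] :
    ∀ x y z : S,
      x * y * z * x = x * y * z * x + x * y * x * z * x + x * y * z * x ∧
      x * y * x * z * x = x * y * x * z * x + x * y * z * x + x * y * x * z * x := by
  intro x y z
  have mi : ∀ a : S, a * a = a := IdemSemiring'.mul_idem
  have ai : ∀ a : S, a + a = a := IdemSemiring'.add_idem
  have M : ∀ a b c : S, a * b * c = a * (b * c) := IdemSemiring'.mul_assoc
  have A : ∀ a b c : S, a + b + c = a + (b + c) := IdemSemiring'.add_assoc
  have ld : ∀ a b c : S, a * (b + c) = a * b + a * c := IdemSemiring'.left_distrib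
  have rd : ∀ a b c : S, (a + b) * c = a * c + b * c := IdemSemiring'.right_distrib
  -- abbreviations: u = x*y*z*x , v = x*y*x*z*x , P = u*v
  have hu : x*y*z*x = (x*y)*(z*x) := M (x*y) z x
  have hv : x*y*x*z*x = (x*y*x)*(z*x) := M (x*y*x) z x
  -- basic band facts
  have F1 : (x*y*z*x)*(z*x) = x*y*z*x := by
    rw [hu, M (x*y) (z*x) (z*x), mi (z*x)]
  have Fux : (x*y*z*x)*x = x*y*z*x := by
    rw [M (x*y*z) x x, mi x]
  have F2 : (x*y*z*x)*(x*(z*x)) = x*y*z*x := by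
    rw [← M (x*y*z*x) x (z*x), Fux]; exact F1
  have Fvzx : (x*y*x*z*x)*(z*x) = x*y*x*z*x := by
    rw [hv, M (x*y*x) (z*x) (z*x), mi (z*x)]
  have hxu : x*(x*y*z*x) = x*y*z*x := by
    rw [M x y z, M x (y*z) x, ← M x x ((y*z)*x), mi x]
  have hxyu : (x*y)*(x*y*z*x) = x*y*z*x := by
    rw [hu, ← M (x*y) (x*y) (z*x), mi (x*y)]
  have F3 : (x*y*x)*(x*y*z*x) = x*y*z*x := by
    rw [M (x*y) x (x*y*z*x), hxu]; exact hxyu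
  have bf4 : (x*y*x*z*x)*((x*y*z*x)*(x*y*x*z*x)) = x*y*x*z*x := by
    rw [hu, hv]; exact LB (x*y) (z*x) x
  -- term lemmas shared by several engines
  have L1 : (x*y)*(x*(z*x)) = x*y*x*z*x := by
    rw [← M (x*y) x (z*x), hv]
  have L2 : (x*(y*(z*x)))*(x*(z*x)) = x*y*z*x := by
    rw [← M x y (z*x), ← hu]; exact F2
  have R1 : (x*(y*y))*(x*(z*x)) = x*y*x*z*x := by
    rw [mi y]; exact L1
  have R3 : (x*(y*(y*(z*x))))*(x*(z*x)) = x*y*z*x := by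
    rw [← M y y (z*x), mi y]; exact L2
  have R4 : (x*((y*(z*x))*(y*(z*x))))*(x*(z*x)) = x*y*z*x := by
    rw [mi (y*(z*x))]; exact L2
  have hPa : (x*y*z*x)*(x*y*x*z*x) = ((x*y*z*x)*y)*(x*(z*x)) := by
    rw [hv, M x y x, M x (y*x) (z*x), ← M (x*y*z*x) x ((y*x)*(z*x)), Fux,
      ← M (x*y*z*x) (y*x) (z*x), ← M (x*y*z*x) y x, M ((x*y*z*x)*y) x (z*x)]
  have hPb : (x*((y*(z*x))*y))*(x*(z*x)) = ((x*y*z*x)*y)*(x*(z*x)) := by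
    rw [← M x (y*(z*x)) y, ← M x y (z*x), ← hu]
  have R2 : (x*((y*(z*x))*y))*(x*(z*x)) = (x*y*z*x)*(x*y*x*z*x) := hPb.trans hPa.symm
  -- engine E1 : d + u = d + (v + u), where d = x*(z*x)
  have e1t1 : (x*(x*x))*(z*x) = x*(z*x) := by rw [mi x, mi x]
  have e1t2 : (x*(y*x))*(z*x) = x*y*x*z*x := by rw [← M x y x, hv]
  have e1t3 : (x*(x*y))*(z*x) = x*y*z*x := by rw [← M x x y, mi x, ← hu]
  have e1t4 : (x*(y*y))*(z*x) = x*y*z*x := by rw [mi y, ← hu]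
  have l1E1 : (x*x)*(z*x) = x*(z*x) := by rw [mi x]
  have E1 : x*(z*x) + x*y*z*x = x*(z*x) + (x*y*x*z*x + x*y*z*x) := by
    have h := engA x x y (z*x)
    rw [e1t1, e1t2, e1t3, e1t4, l1E1, ← hu] at h
    rw [ai (x*y*z*x)] at h
    rw [A (x*(z*x)) (x*y*x*z*x) (x*y*z*x)] at h
    exact h
  -- M1 : u = u + (u*v + u)
  have M1 : x*y*z*x = x*y*z*x + ((x*y*z*x)*(x*y*x*z*x) + x*y*z*x) := by
    have e : (x*y*z*x)*(x*(z*x) + x*y*z*x)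
        = (x*y*z*x)*(x*(z*x) + (x*y*x*z*x + x*y*z*x)) := by rw [E1]
    rw [ld (x*y*z*x) (x*(z*x)) (x*y*z*x),
        ld (x*y*z*x) (x*(z*x)) (x*y*x*z*x + x*y*z*x),
        ld (x*y*z*x) (x*y*x*z*x) (x*y*z*x),
        F2, mi (x*y*z*x), ai (x*y*z*x)] at e
    exact e
  -- engine E2 : c + u = c + (v + u), where c = x*y*x
  have lhs1 : ((x*y)*x)*x = x*y*x := by rw [M (x*y) x x, mi x]
  have rhs1 : ((x*y)*(x*x))*x = x*y*x := by rw [mi x, M (x*y) x x, mi x]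
  have rhs2 : ((x*y)*(x*z))*x = x*y*x*z*x := by rw [← M (x*y) x z]
  have rhs3 : ((x*y)*(z*x))*x = x*y*z*x := by rw [← hu]; exact Fux
  have rhs4 : ((x*y)*(z*z))*x = x*y*z*x := by rw [mi z]
  have E2 : x*y*x + x*y*z*x = x*y*x + (x*y*x*z*x + x*y*z*x) := by
    have h := engB (x*y) x z x
    rw [lhs1, rhs1, rhs2, rhs3, rhs4] at h
    rw [ai (x*y*z*x)] at h
    rw [A (x*y*x) (x*y*x*z*x) (x*y*z*x)] at h
    exact h
  -- Q2' : P = P + (v + P)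
  have hc : (x*y*x)*((x*y*z*x)*(x*y*x*z*x)) = (x*y*z*x)*(x*y*x*z*x) := by
    rw [← M (x*y*x) (x*y*z*x) (x*y*x*z*x), F3]
  have hup : (x*y*z*x)*((x*y*z*x)*(x*y*x*z*x)) = (x*y*z*x)*(x*y*x*z*x) := by
    rw [← M (x*y*z*x) (x*y*z*x) (x*y*x*z*x), mi (x*y*z*x)]
  have Q2' : (x*y*z*x)*(x*y*x*z*x)
      = (x*y*z*x)*(x*y*x*z*x) + (x*y*x*z*x + (x*y*z*x)*(x*y*x*z*x)) := by
    have e : (x*y*x + x*y*z*x)*((x*y*z*x)*(x*y*x*z*x))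
        = (x*y*x + (x*y*x*z*x + x*y*z*x))*((x*y*z*x)*(x*y*x*z*x)) := by rw [E2]
    rw [rd (x*y*x) (x*y*z*x) ((x*y*z*x)*(x*y*x*z*x)),
        rd (x*y*x) (x*y*x*z*x + x*y*z*x) ((x*y*z*x)*(x*y*x*z*x)),
        rd (x*y*x*z*x) (x*y*z*x) ((x*y*z*x)*(x*y*x*z*x)),
        hc, hup, bf4, ai ((x*y*z*x)*(x*y*x*z*x))] at e
    exact e
  -- E5' : v + u = v + (P + u)
  have E5' : x*y*x*z*x + x*y*z*x
      = x*y*x*z*x + ((x*y*z*x)*(x*y*x*z*x) + x*y*z*x) := by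
    have h := engA x y (y*(z*x)) (x*(z*x))
    rw [L1, L2, R1, R2, R3, R4] at h
    rw [ai (x*y*z*x)] at h
    rw [A (x*y*x*z*x) ((x*y*z*x)*(x*y*x*z*x)) (x*y*z*x)] at h
    exact h
  -- E6' : u + v = u + (P + v)
  have E6' : x*y*z*x + x*y*x*z*x
      = x*y*z*x + ((x*y*z*x)*(x*y*x*z*x) + x*y*x*z*x) := by
    have h := engA x (y*(z*x)) y (x*(z*x))
    rw [L1, L2, R1, R2, R3, R4] at h
    rw [ai (x*y*z*x)] at h
    exact h
  constructor
  · -- u = (u + v) + u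
    calc x*y*z*x
        = x*y*z*x + ((x*y*z*x)*(x*y*x*z*x) + x*y*z*x) := M1
      _ = x*y*z*x + (((x*y*z*x)*(x*y*x*z*x)
            + (x*y*x*z*x + (x*y*z*x)*(x*y*x*z*x))) + x*y*z*x) := by rw [← Q2']
      _ = x*y*z*x + ((x*y*z*x)*(x*y*x*z*x)
            + ((x*y*x*z*x + (x*y*z*x)*(x*y*x*z*x)) + x*y*z*x)) := by
          rw [A ((x*y*z*x)*(x*y*x*z*x)) (x*y*x*z*x + (x*y*z*x)*(x*y*x*z*x)) (x*y*z*x)]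
      _ = x*y*z*x + ((x*y*z*x)*(x*y*x*z*x)
            + (x*y*x*z*x + ((x*y*z*x)*(x*y*x*z*x) + x*y*z*x))) := by
          rw [A (x*y*x*z*x) ((x*y*z*x)*(x*y*x*z*x)) (x*y*z*x)]
      _ = x*y*z*x + ((x*y*z*x)*(x*y*x*z*x) + (x*y*x*z*x + x*y*z*x)) := by
          rw [← E5']
      _ = x*y*z*x + (((x*y*z*x)*(x*y*x*z*x) + x*y*x*z*x) + x*y*z*x) := by
          rw [← A ((x*y*z*x)*(x*y*x*z*x)) (x*y*x*z*x) (x*y*z*x)]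
      _ = (x*y*z*x + ((x*y*z*x)*(x*y*x*z*x) + x*y*x*z*x)) + x*y*z*x := by
          rw [← A (x*y*z*x) ((x*y*z*x)*(x*y*x*z*x) + x*y*x*z*x) (x*y*z*x)]
      _ = (x*y*z*x + x*y*x*z*x) + x*y*z*x := by rw [← E6']
  · -- v = (v + u) + v  via the direct engine
    have tA : ((x*y*x)*z)*(x*(z*x)) = x*y*x*z*x := by
      rw [← M (x*y*x*z) x (z*x)]; exact Fvzx
    have tB : ((x*y*x)*y)*(x*(z*x)) = x*y*x*z*x := by
      rw [M (x*y) x y, mi (x*y)]; exact L1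
    have tZZ : ((x*y*x)*(z*z))*(x*(z*x)) = x*y*x*z*x := by
      rw [mi z]; exact tA
    have tYY : ((x*y*x)*(y*y))*(x*(z*x)) = x*y*x*z*x := by
      rw [mi y]; exact tB
    have tU : ((x*y*x)*(y*z))*(x*(z*x)) = x*y*z*x := by
      rw [← M (x*y*x) y z, M (x*y) x y, mi (x*y), ← M (x*y*z) x (z*x)]
      exact F1
    have tV2 : ((x*y*x)*(z*y))*(x*(z*x)) = x*y*x*z*x := by
      rw [← M (x*y*x) z y, M ((x*y*x)*z) y (x*(z*x)), ← M y x (z*x),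
        ← M (y*x) z x, M y x z, M (x*y) x z, M x y (x*z),
        M x (y*(x*z)) ((y*(x*z))*x), ← M (y*(x*z)) (y*(x*z)) x,
        mi (y*(x*z)), ← M x (y*(x*z)) x]
    have h := engB (x*y*x) z y (x*(z*x))
    rw [tA, tB, tZZ, tV2, tU, tYY] at h
    rw [ai (x*y*x*z*x)] at h
    rw [A (x*y*x*z*x) (x*y*z*x) (x*y*x*z*x)]
    exact h
end

section
/- For an idempotent semiring S, the following are equivalent: (1) S satisfies both xyz ≈ xzy and x ≈ xyx + x + xyx; (2) S satisfies xz ≈ xzy + xz + xzy; (3) S satisfies x ≈ xy + x + xy. -/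
namespace Stmt18Aux

variable {S : Type*} [IdemSemiring' S]

lemma aas (a b c : S) : a + b + c = a + (b + c) := IdemSemiring'.add_assoc a b c
lemma mas (a b c : S) : a * b * c = a * (b * c) := IdemSemiring'.mul_assoc a b c
lemma ldist (a b c : S) : a * (b + c) = a * b + a * c := IdemSemiring'.left_distrib a b c
lemma rdist (a b c : S) : (a + b) * c = a * c + b * c := IdemSemiring'.right_distrib a b c
lemma aidem (a : S) : a + a = a := IdemSemiring'.add_idem a
lemma midem (a : S) : a * a = a := IdemSemiring'.mul_idem a

lemma absorb_left {x p : S} (h : x = p + x + p) : p + x = x := by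
  calc p + x = p + (p + x + p) := by rw [← h]
    _ = p + (p + x) + p := by rw [← aas p (p + x) p]
    _ = p + p + x + p := by rw [← aas p p x]
    _ = p + x + p := by rw [aidem]
    _ = x := h.symm

lemma absorb_right {x p : S} (h : x = p + x + p) : x + p = x := by
  calc x + p = p + x + p + p := by rw [← h]
    _ = p + x + (p + p) := by rw [aas]
    _ = p + x + p := by rw [aidem]
    _ = x := h.symm

lemma antisym {u v : S} (h1 : u = v + u + v) (h2 : v = u + v + u) : u = v :=
  (absorb_left h1).symm.trans (absorb_right h2)

/-- From identity (3), the multiplicative band satisfies xyzy = xyz. -/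
lemma w_lem (H : ∀ x y : S, x = x * y + x + x * y) (x y z : S) :
    x * y * z * y = x * y * z := by
  have h1 : x * y * z = x * y * z * y + x * y * z + x * y * z * y := H (x * y * z) y
  have key : x * y * z * y * z = x * y * z := by
    simp only [mas]
    rw [← mas y z (y * z), midem]
  have h2 : x * y * z * y = x * y * z + x * y * z * y + x * y * z := by
    have := H (x * y * z * y) z
    rwa [key] at this
  exact (antisym h1 h2).symm

/-- acb + abc = abc -/
lemma t2_lem (H : ∀ x y : S, x = x * y + x + x * y) (a b c : S) :
    a * c * b + a * b * c = a * b * c := by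
  have h := H a (c + b * c)
  have h2 := congrArg (fun t => t * (b * c)) h
  simp only [ldist, rdist] at h2
  have e1 : a * c * (b * c) = a * c * b := by
    rw [← mas (a * c) b c, w_lem H a c b]
  have e2 : a * (b * c) * (b * c) = a * (b * c) := by
    rw [mas, midem]
  have e3 : a * (b * c) = a * b * c := (mas a b c).symm
  rw [e1, e2, e3] at h2
  -- h2 : a*b*c = (a*c*b + a*b*c) + a*b*c + (a*c*b + a*b*c)
  rw [aas (a*c*b) (a*b*c) (a*b*c), aidem, aidem] at h2
  exact h2.symm

/-- abc + acb = abc -/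
lemma t1_lem (H : ∀ x y : S, x = x * y + x + x * y) (a b c : S) :
    a * b * c + a * c * b = a * b * c := by
  have h := H a (b * c + c)
  have h2 := congrArg (fun t => t * (b * c)) h
  simp only [ldist, rdist] at h2
  have e1 : a * c * (b * c) = a * c * b := by
    rw [← mas (a * c) b c, w_lem H a c b]
  have e2 : a * (b * c) * (b * c) = a * (b * c) := by
    rw [mas, midem]
  have e3 : a * (b * c) = a * b * c := (mas a b c).symm
  rw [e1, e2, e3] at h2
  -- h2 : a*b*c = (a*b*c + a*c*b) + a*b*c + (a*b*c + a*c*b)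
  have hT2 := t2_lem H a b c
  rw [aas (a*b*c) (a*c*b) (a*b*c), hT2, aidem, ← aas, aidem] at h2
  exact h2.symm

/-- left normality -/
lemma ln_lem (H : ∀ x y : S, x = x * y + x + x * y) (a b c : S) :
    a * b * c = a * c * b := by
  have h1 : a * b * c + a * c * b = a * b * c := t1_lem H a b c
  have h2 : a * b * c + a * c * b = a * c * b := t2_lem H a c b
  exact h1.symm.trans h2

end Stmt18Aux

theorem stmt18 {S : Type*} [IdemSemiring' S] :
    (((∀ x y z : S, x * y * z = x * z * y) ∧ (∀ x y : S, x = x * y * x + x + x * y * x)) ↔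
      (∀ x y z : S, x * z = x * z * y + x * z + x * z * y)) ∧
    ((∀ x y z : S, x * z = x * z * y + x * z + x * z * y) ↔
      (∀ x y : S, x = x * y + x + x * y)) := by
  open Stmt18Aux in
  constructor
  · constructor
    · rintro ⟨hc, hE⟩ x y z
      have h := hE (x * z) y
      have key : x * z * y * (x * z) = x * z * y := by
        have d1 : x * z * z = x * z := by rw [mas x z z, midem]
        have d2 : x * z * x = x * z := by rw [hc x z x, midem]
        rw [← mas (x * z * y) x z, hc (x * z * y) x z]
        rw [hc (x * z) y z, d1, hc (x * z) y x, d2]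
      rwa [key] at h
    · intro h2
      have h3 : ∀ x y : S, x = x * y + x + x * y := by
        intro x y
        have := h2 x y x
        rwa [midem] at this
      refine ⟨fun x y z => ln_lem h3 x y z, fun x y => ?_⟩
      have := h3 x (y * x)
      rwa [← mas x y x] at this
  · constructor
    · intro h2 x y
      have := h2 x y x
      rwa [midem] at this
    · intro h3 x y z
      exact h3 (x * z) y
end

section
/- Let S be an idempotent semiring satisfying x ≈ xyx + x + xyx. Then the multiplicative relation L• (a L• b iff ab = a and ba = b) is a semiring congruence on S. Moreover, for all a, b ∈ S, a L• (ba + a + ba), so the quotient S/L• satisfies x ≈ yx + x + yx. -/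
section Aux

variable {S : Type*} [IdemSemiring' S]

private lemma aAx (x y z : S) : x + y + z = x + (y + z) := IdemSemiring'.add_assoc x y z
private lemma mAx (x y z : S) : x * y * z = x * (y * z) := IdemSemiring'.mul_assoc x y z
private lemma ldx (x y z : S) : x * (y + z) = x * y + x * z := IdemSemiring'.left_distrib x y z
private lemma rdx (x y z : S) : (x + y) * z = x * z + y * z := IdemSemiring'.right_distrib x y z
private lemma aIx (x : S) : x + x = x := IdemSemiring'.add_idem x
private lemma mIx (x : S) : x * x = x := IdemSemiring'.mul_idem x

private lemma labs' (h : ∀ x y : S, x = x * y * x + x + x * y * x) (x y : S) :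
    x * y * x + x = x := by
  have H := h x y
  revert H
  generalize x * y * x = w
  intro H
  calc w + x = w + (w + x + w) := congrArg (w + ·) H
    _ = w + (w + x) + w := (aAx w (w + x) w).symm
    _ = w + w + x + w := by rw [aAx w w x]
    _ = w + x + w := by rw [aIx w]
    _ = x := H.symm

private lemma rabs' (h : ∀ x y : S, x = x * y * x + x + x * y * x) (x y : S) :
    x + x * y * x = x := by
  have H := h x y
  revert H
  generalize x * y * x = w
  intro H
  calc x + w = (w + x + w) + w := congrArg (· + w) H
    _ = (w + x) + (w + w) := aAx (w + x) w w
    _ = w + x + w := by rw [aIx w]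
    _ = x := H.symm

private lemma keylem (h : ∀ x y : S, x = x * y * x + x + x * y * x) (a b : S)
    (hab : a * b = a) (hba : b * a = b) (c : S) : c * a = c * b := by
  have cab : c * a * b = c * a := by rw [mAx, hab]
  have E1 : c * a * (c * b) * (c * a) = c * a := by
    calc c * a * (c * b) * (c * a)
        = c * (a * b) * (c * b) * (c * a) := by rw [hab]
      _ = c * a * ((b * c) * (b * c)) * a := by simp only [mAx]
      _ = c * a * (b * c) * a := by rw [mIx (b * c)]
      _ = c * (a * b) * (c * a) := by simp only [mAx]
      _ = c * a * (c * a) := by rw [hab]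
      _ = c * a := mIx _
  have E2 : c * b * (c * a) * (c * b) = c * b := by
    calc c * b * (c * a) * (c * b)
        = c * (b * a) * (c * a) * (c * b) := by rw [hba]
      _ = c * b * ((a * c) * (a * c)) * b := by simp only [mAx]
      _ = c * b * (a * c) * b := by rw [mIx (a * c)]
      _ = c * (b * a) * (c * b) := by simp only [mAx]
      _ = c * b * (c * b) := by rw [hba]
      _ = c * b := mIx _
  have U1 : c * a + c * a * (c * b) = c * a := by
    have X : c * a * (b * c * b) = c * a * (c * b) := by
      calc c * a * (b * c * b) = c * (a * b) * (c * b) := by simp only [mAx]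
        _ = c * a * (c * b) := by rw [hab]
    calc c * a + c * a * (c * b)
        = c * a * b + c * a * (b * c * b) := by rw [cab, X]
      _ = c * a * (b + b * c * b) := (ldx (c * a) b (b * c * b)).symm
      _ = c * a * b := by rw [rabs' h b c]
      _ = c * a := cab
  have L1 : c * a + c * a * (c * b) = c * a * (c * b) := by
    have A1 : c * (a * c) * (b * (c * a) * b) = c * a := by
      calc c * (a * c) * (b * (c * a) * b)
          = c * a * (c * b) * (c * a) * b := by simp only [mAx]
        _ = c * a * b := by rw [E1]
        _ = c * a := cab
    have B1 : c * (a * c) * b = c * a * (c * b) := by simp only [mAx]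
    calc c * a + c * a * (c * b)
        = c * (a * c) * (b * (c * a) * b) + c * (a * c) * b := by rw [A1, B1]
      _ = c * (a * c) * (b * (c * a) * b + b) := (ldx _ _ _).symm
      _ = c * (a * c) * b := by rw [labs' h b (c * a)]
      _ = c * a * (c * b) := B1
  have U2 : c * b + c * a * (c * b) = c * b := by
    calc c * b + c * a * (c * b)
        = c * b + c * a * c * b := by simp only [mAx]
      _ = (c + c * a * c) * b := (rdx c (c * a * c) b).symm
      _ = c * b := by rw [rabs' h c a]
  have L2 : c * b + c * a * (c * b) = c * a * (c * b) := by
    have P : c * b * c * (a * (c * b)) = c * b := by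
      calc c * b * c * (a * (c * b)) = c * b * (c * a) * (c * b) := by simp only [mAx]
        _ = c * b := E2
    have Q : c * (a * (c * b)) = c * a * (c * b) := by simp only [mAx]
    calc c * b + c * a * (c * b)
        = c * b * c * (a * (c * b)) + c * (a * (c * b)) := by rw [P, Q]
      _ = (c * b * c + c) * (a * (c * b)) := (rdx (c * b * c) c (a * (c * b))).symm
      _ = c * (a * (c * b)) := by rw [labs' h c b]
      _ = c * a * (c * b) := Q
  calc c * a = c * a + c * a * (c * b) := U1.symm
    _ = c * a * (c * b) := L1
    _ = c * b + c * a * (c * b) := L2.symm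
    _ = c * b := U2

private lemma expand' (x y u v : S) :
    (x + y) * (u + v) = x * u + x * v + (y * u + y * v) := by
  rw [rdx, ldx, ldx]

end Aux

theorem stmt19 {S : Type*} [IdemSemiring' S]
    (h : ∀ x y : S, x = x * y * x + x + x * y * x) :
    Equivalence (fun a b : S => a * b = a ∧ b * a = b) ∧
    (∀ a b c d : S, a * b = a ∧ b * a = b → c * d = c ∧ d * c = d →
      (a + c) * (b + d) = a + c ∧ (b + d) * (a + c) = b + d) ∧
    (∀ a b c d : S, a * b = a ∧ b * a = b → c * d = c ∧ d * c = d →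
      (a * c) * (b * d) = a * c ∧ (b * d) * (a * c) = b * d) ∧
    (∀ a b : S, a * (b * a + a + b * a) = a ∧ (b * a + a + b * a) * a = b * a + a + b * a) := by
  refine ⟨⟨fun x => ⟨mIx x, mIx x⟩, ?_, ?_⟩, ?_, ?_, ?_⟩
  · -- symm
    rintro x y ⟨h1, h2⟩
    exact ⟨h2, h1⟩
  · -- trans
    rintro x y z ⟨h1, h2⟩ ⟨h3, h4⟩
    constructor
    · calc x * z = x * y * z := by rw [h1]
        _ = x * (y * z) := mAx x y z
        _ = x * y := by rw [h3]
        _ = x := h1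
    · calc z * x = z * y * x := by rw [h4]
        _ = z * (y * x) := mAx z y x
        _ = z * y := by rw [h2]
        _ = z := h4
  · -- additive compatibility
    rintro a b c d ⟨hab, hba⟩ ⟨hcd, hdc⟩
    have k1 : c * a = c * b := keylem h a b hab hba c
    have k2 : a * c = a * d := keylem h c d hcd hdc a
    have k3 : d * a = d * b := keylem h a b hab hba d
    have k4 : b * c = b * d := keylem h c d hcd hdc b
    constructor
    · calc (a + c) * (b + d)
          = a * b + a * d + (c * b + c * d) := expand' a c b d
        _ = a * a + a * c + (c * a + c * c) := by
            rw [hab, hcd, ← k2, ← k1, mIx a, mIx c]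
        _ = (a + c) * (a + c) := (expand' a c a c).symm
        _ = a + c := mIx (a + c)
    · calc (b + d) * (a + c)
          = b * a + b * c + (d * a + d * c) := expand' b d a c
        _ = b * b + b * d + (d * b + d * d) := by
            rw [hba, hdc, k4, k3, mIx b, mIx d]
        _ = (b + d) * (b + d) := (expand' b d b d).symm
        _ = b + d := mIx (b + d)
  · -- multiplicative compatibility
    rintro a b c d ⟨hab, hba⟩ ⟨hcd, hdc⟩
    have hbd : b * c = b * d := keylem h c d hcd hdc b
    constructor
    · calc (a * c) * (b * d) = (a * c) * (b * c) := by rw [← hbd]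
        _ = (a * b) * c * (b * c) := by rw [hab]
        _ = a * ((b * c) * (b * c)) := by simp only [mAx]
        _ = a * (b * c) := by rw [mIx (b * c)]
        _ = (a * b) * c := (mAx a b c).symm
        _ = a * c := by rw [hab]
    · calc (b * d) * (a * c) = (b * c) * (a * c) := by rw [← hbd]
        _ = (b * a) * c * (a * c) := by rw [hba]
        _ = b * ((a * c) * (a * c)) := by simp only [mAx]
        _ = b * (a * c) := by rw [mIx (a * c)]
        _ = (b * a) * c := (mAx b a c).symm
        _ = b * c := by rw [hba]
        _ = b * d := hbd
  · -- quotient identity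
    intro a b
    constructor
    · calc a * (b * a + a + b * a)
          = a * (b * a + a) + a * (b * a) := ldx a (b * a + a) (b * a)
        _ = a * (b * a) + a * a + a * (b * a) := by rw [ldx a (b * a) a]
        _ = a * b * a + a + a * b * a := by rw [← mAx a b a, mIx a]
        _ = a := (h a b).symm
    · calc (b * a + a + b * a) * a
          = (b * a + a) * a + b * a * a := rdx (b * a + a) (b * a) a
        _ = b * a * a + a * a + b * a * a := by rw [rdx (b * a) a a]
        _ = b * a + a + b * a := by rw [mAx b a a, mIx a]
end
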